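/- Pruning persistence: with notation as before, if S_{t,t'} = ∅ for some t > t' ≥ k, then S_{t*,t'} = ∅ for all t* ≥ t. That is, once a candidate change-point is optimal for no value of μ, it remains non-optimal forever and may be discarded. -/

import Mathlib

/-- Candidate cost `h_{t,s}(μ) = C_s + ∑_{i=s+1}^{t} γ(Y_i)(μ)`. -/
noncomputable def candCost {A : Type*} (Y : ℕ → A) (γ : A → ℝ → ℝ) (C : ℕ → ℝ)
    (t s : ℕ) (μ : ℝ) : ℝ :=
  C s + ∑ i ∈ Finset.Ioc s t, γ (Y i) μ

/-- `H_t(μ) = min_{k ≤ s < t} h_{t,s}(μ)`. -/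
noncomputable def Hfun {A : Type*} (Y : ℕ → A) (γ : A → ℝ → ℝ) (C : ℕ → ℝ)
    (k t : ℕ) (μ : ℝ) : ℝ :=
  sInf {x : ℝ | ∃ s : ℕ, k ≤ s ∧ s < t ∧ x = candCost Y γ C t s μ}

/-- `S_{t,t'}`: the set of `μ` for which a last change-point at `t'` is optimal at time `t`. -/
noncomputable def Sset {A : Type*} (Y : ℕ → A) (γ : A → ℝ → ℝ) (C : ℕ → ℝ)
    (k t t' : ℕ) : Set ℝ :=
  {μ : ℝ | candCost Y γ C t t' μ = Hfun Y γ C k t μ}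

/-!
Past time `t`, every candidate `s ≤ t` accrues the same increment `∑_{i=t+1}^{t*} γ(Y_i)(μ)`,
so the comparison between two such candidates never changes. Hence a `μ` for which `t'` is
optimal at time `t* ≥ t` already made `t'` optimal at time `t`: `S_{t*,t'} ⊆ S_{t,t'}`.
-/

section PruningPersistence

variable {A : Type*} (Y : ℕ → A) (γ : A → ℝ → ℝ) (C : ℕ → ℝ)

theorem candCost_eq_add_sum {u t ts : ℕ} (hu : u ≤ t) (hts : t ≤ ts) (μ : ℝ) :
    candCost Y γ C ts u μ = candCost Y γ C t u μ + ∑ i ∈ Finset.Ioc t ts, γ (Y i) μ := by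
  rw [candCost, candCost, add_assoc, Finset.sum_Ioc_consecutive _ hu hts]

theorem bddBelow_candCosts (k t : ℕ) (μ : ℝ) :
    BddBelow {x : ℝ | ∃ s : ℕ, k ≤ s ∧ s < t ∧ x = candCost Y γ C t s μ} := by
  refine ((Set.finite_Ico k t).image fun s => candCost Y γ C t s μ).bddBelow.mono ?_
  rintro _ ⟨s, hks, hst, rfl⟩
  exact ⟨s, ⟨hks, hst⟩, rfl⟩

theorem Hfun_le_candCost {k t s : ℕ} (hks : k ≤ s) (hst : s < t) (μ : ℝ) :
    Hfun Y γ C k t μ ≤ candCost Y γ C t s μ :=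
  csInf_le (bddBelow_candCosts Y γ C k t μ) ⟨s, hks, hst, rfl⟩

theorem mem_Sset_iff {k t t' : ℕ} (hk : k ≤ t') (ht : t' < t) {μ : ℝ} :
    μ ∈ Sset Y γ C k t t' ↔
      ∀ s, k ≤ s → s < t → candCost Y γ C t t' μ ≤ candCost Y γ C t s μ := by
  refine ⟨fun h s hks hst => h ▸ Hfun_le_candCost Y γ C hks hst μ, fun h => ?_⟩
  refine le_antisymm ?_ (Hfun_le_candCost Y γ C hk ht μ)
  refine le_csInf ⟨_, t', hk, ht, rfl⟩ ?_
  rintro _ ⟨s, hks, hst, rfl⟩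
  exact h s hks hst

theorem Sset_subset_of_le {k t t' ts : ℕ} (hk : k ≤ t') (ht : t' < t) (hts : t ≤ ts) :
    Sset Y γ C k ts t' ⊆ Sset Y γ C k t t' := by
  intro μ hμ
  rw [mem_Sset_iff Y γ C hk (ht.trans_le hts)] at hμ
  rw [mem_Sset_iff Y γ C hk ht]
  intro s hks hst
  have h := hμ s hks (hst.trans_le hts)
  rwa [candCost_eq_add_sum Y γ C ht.le hts, candCost_eq_add_sum Y γ C hst.le hts,
    add_le_add_iff_right] at h

end PruningPersistence

/-- Pruning persistence: once `S_{t,t'} = ∅`, it stays empty forever. -/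
theorem pruning_persistence {A : Type*} (Y : ℕ → A) (γ : A → ℝ → ℝ) (C : ℕ → ℝ)
    (k t t' : ℕ) (hk : k ≤ t') (ht : t' < t)
    (hempty : Sset Y γ C k t t' = ∅) :
    ∀ ts : ℕ, t ≤ ts → Sset Y γ C k ts t' = ∅ :=
  fun _ hts => Set.subset_eq_empty (Sset_subset_of_le Y γ C hk ht hts) hempty
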